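/- Let G be a CFG (boolean-weighted) generating language L(G) ⊆ Σ*. Then the prefix grammar Pre(G) generates exactly the set of prefixes of strings in L(G): L(Pre(G)) = { x ∈ Σ* : ∃ y ∈ Σ*, x y ∈ L(G) }, provided L(G) is nonempty (so that the rule S̄ → ε with weight Z(S) = 1 is present); if L(G) is empty, then L(Pre(G)) is empty. -/
import Mathlib


/-- Embed a symbol of `G` into the symbol set of the prefix grammar (unprimed copy). -/
def liftSym {V T : Type} : V ⊕ T → (Option (V ⊕ V)) ⊕ T
  | .inl X => .inl (some (.inl X))
  | .inr t => .inr t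

/-- The primed copy of a symbol: terminals are unchanged, nonterminals get primed. -/
def primeSym {V T : Type} : V ⊕ T → (Option (V ⊕ V)) ⊕ T
  | .inl X => .inl (some (.inr X))
  | .inr t => .inr t

/-- An (unweighted, i.e. boolean-weighted) context-free grammar. -/
structure CFG (V T : Type) where
  start : V
  rules : Set (V × List (V ⊕ T))

/-- Derivability: `Derives G α x` iff some `α`-rooted derivation tree has yield `x`. -/
inductive Derives {V T : Type} (G : CFG V T) : (V ⊕ T) → List T → Prop where
  | term (t : T) : Derives G (.inr t) [t]
  | rule {X : V} {rhs : List (V ⊕ T)} {ys : List (List T)} :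
      (X, rhs) ∈ G.rules → rhs.length = ys.length →
      (∀ (i : ℕ) (h1 : i < rhs.length) (h2 : i < ys.length),
        Derives G (rhs.get ⟨i, h1⟩) (ys.get ⟨i, h2⟩)) →
      Derives G (.inl X) ys.flatten

/-- A symbol is productive iff it derives at least one terminal string (`Z(α) = 1` in the
boolean semiring). -/
def Productive {V T : Type} (G : CFG V T) (α : V ⊕ T) : Prop := ∃ y, Derives G α y

/-- The boolean prefix grammar `Pre(G)`. A rule is present iff its weight is `1`. -/
def preCFG {V T : Type} (G : CFG V T) : CFG (Option (V ⊕ V)) T where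
  start := none
  rules :=
    {r | ∃ p ∈ G.rules, r = (some (.inl p.1), p.2.map liftSym)}
    ∪ {(none, [Sum.inl (some (Sum.inr G.start))])}
    ∪ {r | r = (none, []) ∧ Productive G (.inl G.start)}
    ∪ {r | ∃ p ∈ G.rules, ∃ k : Fin p.2.length,
        (∀ j : Fin p.2.length, (k : ℕ) < (j : ℕ) → Productive G (p.2.get j)) ∧
        r = (some (.inr p.1), (p.2.take (k : ℕ)).map liftSym ++ [primeSym (p.2.get k)])}

section Aux
variable {V T : Type} {G : CFG V T}

lemma derives_rule_getElem {X : V} {rhs : List (V ⊕ T)} {ys : List (List T)}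
    (hmem : (X, rhs) ∈ G.rules) (hlen : rhs.length = ys.length)
    (h : ∀ (i : ℕ) (h1 : i < rhs.length) (h2 : i < ys.length),
      Derives G (rhs[i]'h1) (ys[i]'h2)) : Derives G (.inl X) ys.flatten :=
  Derives.rule hmem hlen (by simpa [List.get_eq_getElem] using h)

lemma lift_complete : ∀ {α : V ⊕ T} {x : List T}, Derives G α x →
    Derives (preCFG G) (liftSym α) x := by
  intro α x h
  induction h with
  | term t => exact Derives.term t
  | @rule X rhs ys hmem hlen _ ih =>
    show Derives (preCFG G) (.inl (some (.inl X))) ys.flatten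
    refine derives_rule_getElem (rhs := rhs.map liftSym) ?_ (by simpa using hlen) ?_
    · exact Or.inl (Or.inl (Or.inl ⟨(X, rhs), hmem, rfl⟩))
    · intro i h1 h2
      rw [List.getElem_map]
      simpa [List.get_eq_getElem] using ih i (by simpa using h1) h2

lemma lift_sound : ∀ {β : (Option (V ⊕ V)) ⊕ T} {x : List T}, Derives (preCFG G) β x →
    ∀ α : V ⊕ T, β = liftSym α → Derives G α x := by
  intro β x h
  induction h with
  | term t =>
    rintro (X | t') hα
    · simp [liftSym] at hα
    · obtain rfl : t = t' := by simpa [liftSym] using hα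
      exact Derives.term t
  | @rule Y rhs' ys hmem hlen _ ih =>
    rintro (X | t') hα
    · obtain rfl : Y = some (Sum.inl X) := by simpa [liftSym] using hα
      rcases hmem with ((h | h) | h) | h
      · obtain ⟨⟨P1, P2⟩, hp, heq⟩ := h
        rw [Prod.mk.injEq] at heq
        obtain ⟨h1, rfl⟩ := heq
        obtain rfl : X = P1 := by simpa using h1
        refine derives_rule_getElem hp (by simpa using hlen) ?_
        intro i hi1 hi2
        have := ih i (by simpa using hi1) hi2 (P2[i]'hi1) (by simp [List.get_eq_getElem])
        simpa [List.get_eq_getElem] using this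
      · simp at h
      · simp at h
      · obtain ⟨p, _, k, _, heq⟩ := h
        rw [Prod.mk.injEq] at heq
        simp at heq
    · simp [liftSym] at hα
lemma exists_split : ∀ (ys : List (List T)) (x y : List T), x ≠ [] →
    x ++ y = ys.flatten →
    ∃ (k : ℕ) (hk : k < ys.length) (xk yk : List T),
      x = (ys.take k).flatten ++ xk ∧ xk ++ yk = ys[k] ∧ xk ≠ [] := by
  intro ys
  induction ys with
  | nil =>
    intro x y hx h
    simp only [List.flatten_nil, List.append_eq_nil_iff] at h
    exact absurd h.1 hx
  | cons a ys ih =>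
    intro x y hx h
    simp only [List.flatten_cons] at h
    rcases le_or_gt x.length a.length with hle | hlt
    · refine ⟨0, by simp, x, a.drop x.length, by simp, ?_, hx⟩
      have hx' : x = a.take x.length := by
        have h1 := congrArg (fun l => List.take x.length l) h
        simpa [List.take_append, Nat.sub_eq_zero_of_le hle,
          List.take_left] using h1
      show x ++ a.drop x.length = a
      nth_rewrite 1 [hx']
      exact List.take_append_drop _ _
    · have hxa : x.take a.length = a := by
        have h1 := congrArg (fun l => List.take a.length l) h
        simpa [List.take_append, Nat.sub_eq_zero_of_le hlt.le,
          List.take_left, List.take_of_length_le hlt.le] using h1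
      have hx_eq : x = a ++ x.drop a.length := by
        nth_rewrite 1 [← List.take_append_drop a.length x]
        rw [hxa]
      have hne : x.drop a.length ≠ [] := by
        intro hc
        have := congrArg List.length hc
        simp at this
        omega
      have h' : x.drop a.length ++ y = ys.flatten := by
        have : a ++ (x.drop a.length ++ y) = a ++ ys.flatten := by
          rw [← List.append_assoc, ← hx_eq]; exact h
        exact List.append_cancel_left this
      obtain ⟨k, hk, xk, yk, e1, e2, e3⟩ := ih _ y hne h'
      refine ⟨k + 1, by simpa using Nat.succ_lt_succ hk, xk, yk, ?_, by simpa using e2, e3⟩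
      simp only [List.take_succ_cons, List.flatten_cons, List.append_assoc]
      rw [← e1]
      exact hx_eq

lemma prime_complete : ∀ {α : V ⊕ T} {z : List T}, Derives G α z →
    ∀ x y : List T, z = x ++ y → x ≠ [] → Derives (preCFG G) (primeSym α) x := by
  intro α z h
  induction h with
  | term t =>
    intro x y hz hx
    match x, hx with
    | b :: x', _ =>
      simp only [List.cons_append, List.cons.injEq] at hz
      obtain ⟨rfl, h2⟩ := hz
      obtain ⟨rfl, rfl⟩ := List.append_eq_nil_iff.mp h2.symm
      exact Derives.term t
  | @rule X rhs ys hmem hlen hch ih =>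
    intro x y hz hx
    obtain ⟨k, hk, xk, yk, e1, e2, e3⟩ := exists_split ys x y hx hz.symm
    have hk' : k < rhs.length := hlen ▸ hk
    have hrule : (some (Sum.inr X),
        (rhs.take k).map liftSym ++ [primeSym (rhs.get ⟨k, hk'⟩)]) ∈ (preCFG G).rules := by
      refine Or.inr ⟨(X, rhs), hmem, ⟨k, hk'⟩, ?_, rfl⟩
      intro j hj
      exact ⟨ys.get ⟨(j : ℕ), hlen ▸ j.isLt⟩, hch j j.isLt _⟩
    have hflat : (ys.take k ++ [xk]).flatten = x := by
      simp [List.flatten_append, e1]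
    show Derives (preCFG G) (.inl (some (Sum.inr X))) x
    rw [← hflat]
    refine derives_rule_getElem hrule (by simp; omega) ?_
    intro i h1 h2
    have hi : i < k + 1 := by
      simpa [Nat.min_eq_left hk'.le] using h1
    rcases Nat.lt_or_ge i k with hik | hik
    · rw [List.getElem_append_left (by simpa [Nat.min_eq_left hk'.le] using hik),
        List.getElem_append_left (by simpa [Nat.min_eq_left hk.le] using hik),
        List.getElem_map, List.getElem_take, List.getElem_take]
      have hc := hch i (by omega) (by omega)
      simp only [List.get_eq_getElem] at hc
      exact lift_complete hc
    · have hik' : i = k := by omega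
      subst hik'
      rw [List.getElem_append_right (by simp [Nat.min_eq_left hk'.le]),
        List.getElem_append_right (by simp [Nat.min_eq_left hk.le])]
      simp only [List.length_map, List.length_take, Nat.min_eq_left hk'.le,
        Nat.min_eq_left hk.le, Nat.sub_self, List.getElem_singleton]
      exact ih i hk' hk xk yk (by simp [List.get_eq_getElem, ← e2]) e3

lemma prime_sound : ∀ {β : (Option (V ⊕ V)) ⊕ T} {x : List T}, Derives (preCFG G) β x →
    ∀ α : V ⊕ T, β = primeSym α → ∃ y, Derives G α (x ++ y) := by
  intro β x h
  induction h with
  | term t =>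
    rintro (X | t') hα
    · simp [primeSym] at hα
    · obtain rfl : t = t' := by simpa [primeSym] using hα
      exact ⟨[], by simpa using Derives.term t⟩
  | @rule Y rhs' ys hmem hlen hch ih =>
    rintro (X | t') hα
    · obtain rfl : Y = some (Sum.inr X) := by simpa [primeSym] using hα
      rcases hmem with ((h | h) | h) | h
      · obtain ⟨p, _, heq⟩ := h
        rw [Prod.mk.injEq] at heq
        simp at heq
      · simp at h
      · simp at h
      · obtain ⟨⟨P1, P2⟩, hp, k, hprod, heq⟩ := h
        rw [Prod.mk.injEq] at heq
        obtain ⟨h1, rfl⟩ := heq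
        obtain rfl : X = P1 := by simpa using h1
        -- lengths
        have hkL : (k : ℕ) < P2.length := k.isLt
        have hlen' : ys.length = (k : ℕ) + 1 := by
          simpa [Nat.min_eq_left hkL.le] using hlen.symm
        have hysne : ys ≠ [] := by
          intro hc; rw [hc] at hlen'; simp at hlen'
        -- child k (the primed one)
        have hk2 : (k : ℕ) < ys.length := by omega
        have hk1 : (k : ℕ) < (List.map liftSym (List.take (k:ℕ) P2)
            ++ [primeSym (P2.get k)]).length := by
          simp [Nat.min_eq_left hkL.le]
        obtain ⟨y', hy'⟩ := ih (k : ℕ) hk1 hk2 (P2.get k) (by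
          rw [List.get_eq_getElem,
            List.getElem_append_right (by simp [Nat.min_eq_left hkL.le])]
          simp [Nat.min_eq_left hkL.le])
        -- earlier children
        have hlift : ∀ i (hi : i < (k:ℕ)),
            Derives G (P2[i]'(by omega)) (ys[i]'(by omega)) := by
          intro i hi
          have hc := hch i (by simp [Nat.min_eq_left hkL.le]; omega) (by omega)
          have heq2 : (List.map liftSym (List.take (k:ℕ) P2)
              ++ [primeSym (P2.get k)]).get ⟨i, by simp [Nat.min_eq_left hkL.le]; omega⟩
              = liftSym (P2[i]'(by omega)) := by
            rw [List.get_eq_getElem,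
              List.getElem_append_left (by simp [Nat.min_eq_left hkL.le]; omega),
              List.getElem_map, List.getElem_take]
          rw [heq2] at hc
          have := lift_sound hc _ rfl
          simpa [List.get_eq_getElem] using this
        -- tail witnesses via choice
        have hpick : ∀ j : ℕ, ∃ w : List T, ∀ (hj : j < P2.length),
            (k : ℕ) < j → Derives G (P2[j]'hj) w := by
          intro j
          by_cases hj : j < P2.length
          · by_cases hkj : (k : ℕ) < j
            · obtain ⟨w, hw⟩ := hprod ⟨j, hj⟩ hkj
              exact ⟨w, fun _ _ => by simpa [List.get_eq_getElem] using hw⟩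
            · exact ⟨[], fun _ hc => absurd hc hkj⟩
          · exact ⟨[], fun hc _ => absurd hc hj⟩
        choose f hf using hpick
        set tail : List (List T) :=
          (List.range' ((k:ℕ) + 1) (P2.length - ((k:ℕ) + 1))).map f with htail_def
        set mid : List T := ys.getLast hysne ++ y' with hmid_def
        refine ⟨y' ++ tail.flatten, ?_⟩
        have hx : ys.flatten ++ (y' ++ tail.flatten)
            = (ys.dropLast ++ [mid] ++ tail).flatten := by
          conv_lhs => rw [← List.dropLast_append_getLast hysne]
          simp [hmid_def, List.flatten_append, List.append_assoc]
        rw [hx]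
        refine derives_rule_getElem hp ?_ ?_
        · simp [htail_def, hlen']; omega
        · intro j hj1 hj2
          have hdl : ys.dropLast.length = (k:ℕ) := by simp [hlen']
          rcases lt_trichotomy j (k : ℕ) with hjk | hjk | hjk
          · rw [List.getElem_append_left (by simp [hdl]; omega),
              List.getElem_append_left (by omega),
              List.getElem_dropLast]
            exact hlift j hjk
          · subst hjk
            rw [List.getElem_append_left (by simp [hdl]),
              List.getElem_append_right (le_of_eq hdl),
              List.getElem_singleton]
            have hmid2 : mid = (ys[(k:ℕ)]'hk2) ++ y' := by
              rw [hmid_def, List.getLast_eq_getElem]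
              simp [hlen']
            rw [hmid2]
            simpa [List.get_eq_getElem] using hy'
          · rw [List.getElem_append_right (by simp [hdl]; omega)]
            simp only [htail_def, List.getElem_map, List.getElem_range', Nat.one_mul]
            have harg : (k:ℕ) + 1 + (j - (ys.dropLast ++ [mid]).length) = j := by
              simp [hdl]; omega
            rw [harg]
            exact hf j hj1 hjk
    · simp [primeSym] at hα


lemma start_sound {x : List T} (h : Derives (preCFG G) (.inl none) x) :
    ∃ y, Derives G (.inl G.start) (x ++ y) := by
  cases h with
  | rule hmem hlen hch =>
    rename_i rhs2 ys
    rcases hmem with ((h | h) | h) | h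
    · obtain ⟨p, _, heq⟩ := h
      rw [Prod.mk.injEq] at heq
      simp at heq
    · rw [Set.mem_singleton_iff, Prod.mk.injEq] at h
      obtain ⟨-, rfl⟩ := h
      match ys, hlen with
      | [w], _ =>
        have hc := hch 0 (by simp) (by simp)
        have := prime_sound hc (Sum.inl G.start) rfl
        simpa using this
    · obtain ⟨heq, hprod⟩ := h
      rw [Prod.mk.injEq] at heq
      obtain ⟨-, rfl⟩ := heq
      match ys, hlen with
      | [], _ =>
        obtain ⟨y, hy⟩ := hprod
        exact ⟨y, by simpa using hy⟩
    · obtain ⟨p, _, k, _, heq⟩ := h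
      rw [Prod.mk.injEq] at heq
      simp at heq

lemma start_complete {x y : List T} (hprodS : Productive G (.inl G.start))
    (hy : Derives G (.inl G.start) (x ++ y)) :
    Derives (preCFG G) (.inl none) x := by
  by_cases hx : x = []
  · subst hx
    have hmem : ((none : Option (V ⊕ V)), ([] : List ((Option (V ⊕ V)) ⊕ T)))
        ∈ (preCFG G).rules := Or.inl (Or.inr ⟨rfl, hprodS⟩)
    have := Derives.rule (ys := []) hmem rfl (by intro i h1 h2; simp at h1)
    simpa using this
  · have hp : Derives (preCFG G) (primeSym (Sum.inl G.start)) x :=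
      prime_complete hy x y rfl hx
    have hmem : ((none : Option (V ⊕ V)), [Sum.inl (some (Sum.inr G.start))])
        ∈ (preCFG G).rules := Or.inl (Or.inl (Or.inr rfl))
    have := Derives.rule (ys := [x]) hmem rfl (by
      intro i h1 h2
      have : i = 0 := by simpa using h1
      subst this
      exact hp)
    simpa using this

end Aux

/-- In the boolean case, `Pre(G)` generates exactly the prefixes of
`L(G)` when `L(G)` is nonempty, and the empty language when `L(G)` is empty. -/
theorem boolean_prefix_grammar_correct {V T : Type} (G : CFG V T) :
    (Productive G (.inl G.start) →
      ∀ x : List T, Derives (preCFG G) (.inl none) x ↔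
        ∃ y : List T, Derives G (.inl G.start) (x ++ y)) ∧
    (¬ Productive G (.inl G.start) →
      ∀ x : List T, ¬ Derives (preCFG G) (.inl none) x) := by
  constructor
  · intro hprodS x
    constructor
    · exact start_sound
    · rintro ⟨y, hy⟩
      exact start_complete hprodS hy
  · intro hnp x h
    obtain ⟨y, hy⟩ := start_sound h
    exact hnp ⟨x ++ y, hy⟩
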